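/- arXiv:1003.0502 — 5 statements merged into one kernel-verified Lean document; each statement's English description precedes it below -/
import Mathlib

section
/- Let f_1, …, f_k ∈ ℂ[z_1,…,z_d], fix a monomial order, and suppose that for each j, writing f_j = ∑_α c_α z^α with leading term c_β z^β, we have |c_β| > ∑_{α ≠ β} |c_α|. Normalize so that all leading coefficients are 1, and let ρ ∈ (0,1) be such that for all j the sum of absolute values of non-leading coefficients of f_j is at most ρ. Then every polynomial h admits a decomposition h = ∑_{i=1}^k a_i f_i + r with polynomials a_i and remainder r such that ∑_{i=1}^k ‖a_i‖ ≤ (1−ρ)^{-1} ‖h‖ and ‖r‖ ≤ ‖h‖, where ‖·‖ is the ℓ¹ norm on coefficients, and no term of r is divisible by any leading term LT(f_j). -/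
/-!
Run the division algorithm on the leading term `c z^γ` of the current dividend. If some
`LT(f_j) = z^{β_j}` divides it, subtracting `c z^{γ-β_j} f_j` kills that term and, since the
tail of `f_j` has ℓ¹ norm at most `ρ`, lowers `‖p‖` by at least `(1 - ρ)|c|` while the quotient
`a_j` grows by `|c|`; otherwise the term is moved to the remainder. Either way
`‖r‖ + (1 - ρ) ∑ ‖a_i‖ ≤ ‖h‖` is preserved, and the leading monomial decreases in the well-order.
-/

open MvPolynomial Finset

noncomputable section

/-- The ℓ¹ norm of a polynomial: the sum of absolute values of its coefficients. -/
def l1 {d : ℕ} (p : MvPolynomial (Fin d) ℂ) : ℝ :=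
  ∑ α ∈ p.support, ‖p.coeff α‖

/-- total degree |α| of a multi-index -/
def mdeg {d : ℕ} (α : Fin d →₀ ℕ) : ℕ := α.sum fun _ n => n

/-- Drury–Arveson weight  α!/|α|! -/
def daW {d : ℕ} (α : Fin d →₀ ℕ) : ℝ :=
  (∏ i, Nat.factorial (α i)) / Nat.factorial (mdeg α)

/-- Drury–Arveson inner product on polynomials -/
def daInner {d : ℕ} (p q : MvPolynomial (Fin d) ℂ) : ℂ :=
  ∑ α ∈ p.support ∪ q.support, (starRingEnd ℂ) (p.coeff α) * q.coeff α * (daW α : ℂ)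

/-- Drury–Arveson squared norm -/
def daNormSq {d : ℕ} (p : MvPolynomial (Fin d) ℂ) : ℝ :=
  ∑ α ∈ p.support, ‖p.coeff α‖ ^ 2 * daW α

/-- vector valued versions -/
def vInner {d r : ℕ} (p q : Fin r → MvPolynomial (Fin d) ℂ) : ℂ := ∑ t, daInner (p t) (q t)

def vNormSq {d r : ℕ} (p : Fin r → MvPolynomial (Fin d) ℂ) : ℝ := ∑ t, daNormSq (p t)

def vNorm {d r : ℕ} (p : Fin r → MvPolynomial (Fin d) ℂ) : ℝ := Real.sqrt (vNormSq p)

def vHomog {d r : ℕ} (p : Fin r → MvPolynomial (Fin d) ℂ) (n : ℕ) : Prop :=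
  ∀ t, (p t).IsHomogeneous n


open scoped MonomialOrder

section L1Norm

variable {d : ℕ}

lemma l1_nonneg (p : MvPolynomial (Fin d) ℂ) : 0 ≤ l1 p :=
  Finset.sum_nonneg fun _ _ => norm_nonneg _

lemma l1_zero : l1 (0 : MvPolynomial (Fin d) ℂ) = 0 := by
  simp [l1]

lemma l1_eq_sum_of_support_subset (p : MvPolynomial (Fin d) ℂ) {s : Finset (Fin d →₀ ℕ)}
    (hs : p.support ⊆ s) : l1 p = ∑ α ∈ s, ‖p.coeff α‖ :=
  Finset.sum_subset hs fun α _ hα => by rw [notMem_support_iff.mp hα, norm_zero]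

lemma l1_add_le (p q : MvPolynomial (Fin d) ℂ) : l1 (p + q) ≤ l1 p + l1 q := by
  rw [l1_eq_sum_of_support_subset (p + q) support_add,
    l1_eq_sum_of_support_subset p Finset.subset_union_left,
    l1_eq_sum_of_support_subset q Finset.subset_union_right, ← Finset.sum_add_distrib]
  exact Finset.sum_le_sum fun α _ => by simpa only [coeff_add] using norm_add_le _ _

lemma l1_monomial (γ : Fin d →₀ ℕ) (c : ℂ) : l1 (monomial γ c) = ‖c‖ := by
  rw [l1_eq_sum_of_support_subset _ support_monomial_subset, Finset.sum_singleton,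
    coeff_monomial, if_pos rfl]

lemma l1_monomial_mul (δ : Fin d →₀ ℕ) (c : ℂ) (q : MvPolynomial (Fin d) ℂ) :
    l1 (monomial δ c * q) = ‖c‖ * l1 q := by
  have hsupp : (monomial δ c * q).support ⊆ q.support.map (addLeftEmbedding δ) := by
    intro α hα
    rw [mem_support_iff, coeff_monomial_mul'] at hα
    split_ifs at hα with hδ
    · exact Finset.mem_map.mpr
        ⟨α - δ, mem_support_iff.mpr (right_ne_zero_of_mul hα), add_tsub_cancel_of_le hδ⟩
    · exact absurd rfl hα
  rw [l1_eq_sum_of_support_subset _ hsupp, Finset.sum_map, l1, Finset.mul_sum]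
  simp [coeff_monomial_mul]

lemma l1_sub_monomial_coeff (p : MvPolynomial (Fin d) ℂ) (γ : Fin d →₀ ℕ) :
    l1 (p - monomial γ (p.coeff γ)) = ∑ α ∈ p.support.erase γ, ‖p.coeff α‖ := by
  have hcoeff : ∀ α, (p - monomial γ (p.coeff γ)).coeff α = if α = γ then 0 else p.coeff α := by
    intro α
    rw [coeff_sub, coeff_monomial]
    split_ifs <;> simp_all
  have hsupp : (p - monomial γ (p.coeff γ)).support ⊆ p.support.erase γ := by
    intro α hα
    rw [mem_support_iff, hcoeff] at hα
    split_ifs at hα with h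
    · exact absurd rfl hα
    · exact Finset.mem_erase.mpr ⟨h, mem_support_iff.mpr hα⟩
  rw [l1_eq_sum_of_support_subset _ hsupp]
  exact Finset.sum_congr rfl fun α hα => by rw [hcoeff, if_neg (Finset.ne_of_mem_erase hα)]

lemma norm_coeff_add_l1_sub_monomial_coeff (p : MvPolynomial (Fin d) ℂ) (γ : Fin d →₀ ℕ) :
    ‖p.coeff γ‖ + l1 (p - monomial γ (p.coeff γ)) = l1 p := by
  rw [l1_sub_monomial_coeff]
  by_cases hγ : γ ∈ p.support
  · exact Finset.add_sum_erase p.support (fun α => ‖p.coeff α‖) hγ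
  · rw [notMem_support_iff.mp hγ, norm_zero, zero_add, Finset.erase_eq_of_notMem hγ, l1]

end L1Norm

namespace MonomialOrder

variable {σ R : Type*} [CommRing R] {m : MonomialOrder σ}

lemma degree_eq_of_coeff_ne_zero {p : MvPolynomial σ R} {β : σ →₀ ℕ} (hβ : p.coeff β ≠ 0)
    (hmax : ∀ α ∈ p.support, α ≠ β → α ≺[m] β) : m.degree p = β := by
  refine m.toSyn.injective (le_antisymm ?_ (m.le_degree (mem_support_iff.mpr hβ)))
  refine m.degree_le_iff.mpr fun α hα => ?_
  rcases eq_or_ne α β with rfl | hne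
  · exact le_rfl
  · exact (hmax α hα hne).le

lemma eq_zero_or_degree_lt_of_coeff_eq_zero {q : MvPolynomial σ R} {γ : σ →₀ ℕ}
    (hle : m.degree q ≼[m] γ) (hγ : q.coeff γ = 0) : q = 0 ∨ m.degree q ≺[m] γ := by
  refine or_iff_not_imp_left.mpr fun hq => lt_of_le_of_ne hle fun h => ?_
  exact m.coeff_degree_ne_zero_iff.mpr hq (m.toSyn.injective h ▸ hγ)

lemma subLTerm_eq_zero_or_degree_lt (p : MvPolynomial σ R) :
    m.subLTerm p = 0 ∨ m.degree (m.subLTerm p) ≺[m] m.degree p := by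
  classical
  refine eq_zero_or_degree_lt_of_coeff_eq_zero (m.degree_sub_LTerm_le p) ?_
  simp [subLTerm, leadingCoeff]

lemma sub_monomial_mul_eq_zero_or_degree_lt {p g : MvPolynomial σ R} (hg : m.Monic g)
    {δ : σ →₀ ℕ} (hδ : δ + m.degree g = m.degree p) :
    p - monomial δ (m.leadingCoeff p) * g = 0 ∨
      m.degree (p - monomial δ (m.leadingCoeff p) * g) ≺[m] m.degree p := by
  refine eq_zero_or_degree_lt_of_coeff_eq_zero ?_ ?_
  · refine m.degree_sub_le.trans (sup_le le_rfl ?_)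
    calc m.toSyn (m.degree (monomial δ (m.leadingCoeff p) * g))
        ≤ m.toSyn (m.degree (monomial δ (m.leadingCoeff p))) + m.toSyn (m.degree g) :=
          m.toSyn_degree_mul_le
      _ ≤ m.toSyn δ + m.toSyn (m.degree g) := by gcongr; exact m.degree_monomial_le _
      _ = m.toSyn (m.degree p) := by rw [← map_add, hδ]
  · rw [coeff_sub, ← hδ, coeff_monomial_mul, ← leadingCoeff, hg.leadingCoeff_eq_one, hδ,
      mul_one, leadingCoeff, sub_self]

end MonomialOrder

section Division

variable {d k : ℕ} {f : Fin k → MvPolynomial (Fin d) ℂ} {β : Fin k → Fin d →₀ ℕ} {ρ : ℝ}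

def IsStableDivision (f : Fin k → MvPolynomial (Fin d) ℂ) (β : Fin k → Fin d →₀ ℕ) (ρ : ℝ)
    (p : MvPolynomial (Fin d) ℂ) (a : Fin k → MvPolynomial (Fin d) ℂ)
    (r : MvPolynomial (Fin d) ℂ) : Prop :=
  p = ∑ i, a i * f i + r ∧ l1 r + (1 - ρ) * ∑ i, l1 (a i) ≤ l1 p ∧
    ∀ γ ∈ r.support, ∀ j, ¬ β j ≤ γ

lemma isStableDivision_zero : IsStableDivision f β ρ 0 0 0 := by
  simp [IsStableDivision, l1_zero]

namespace IsStableDivision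

variable {p : MvPolynomial (Fin d) ℂ} {a : Fin k → MvPolynomial (Fin d) ℂ}
  {r : MvPolynomial (Fin d) ℂ}

lemma add_remainder_term {γ : Fin d →₀ ℕ} {c : ℂ}
    (hdiv : IsStableDivision f β ρ (p - monomial γ c) a r) (hγ : ∀ j, ¬ β j ≤ γ)
    (hl1 : ‖c‖ + l1 (p - monomial γ c) ≤ l1 p) :
    IsStableDivision f β ρ p a (r + monomial γ c) := by
  obtain ⟨heq, hbound, hrem⟩ := hdiv
  refine ⟨by linear_combination heq, ?_, fun γ' hγ' => ?_⟩
  · linarith [l1_add_le r (monomial γ c), l1_monomial γ c]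
  · rcases Finset.mem_union.mp (support_add hγ') with h | h
    · exact hrem γ' h
    · rw [Finset.mem_singleton.mp (support_monomial_subset h)]
      exact hγ

lemma add_quotient_term (hρ : ρ ≤ 1) (j : Fin k) {δ : Fin d →₀ ℕ} {c : ℂ}
    (hdiv : IsStableDivision f β ρ (p - monomial δ c * f j) a r)
    (hl1 : l1 (p - monomial δ c * f j) + (1 - ρ) * ‖c‖ ≤ l1 p) :
    IsStableDivision f β ρ p (a + Pi.single j (monomial δ c)) r := by
  obtain ⟨heq, hbound, hrem⟩ := hdiv
  refine ⟨?_, ?_, hrem⟩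
  · simp only [Pi.add_apply, add_mul, Finset.sum_add_distrib, Pi.single_apply, ite_mul,
      zero_mul, Finset.sum_ite_eq', Finset.mem_univ, if_true]
    linear_combination heq
  · set e : Fin k → MvPolynomial (Fin d) ℂ := Pi.single j (monomial δ c)
    have hsum : ∑ i, l1 ((a + e) i) ≤ ∑ i, l1 (a i) + ‖c‖ :=
      calc ∑ i, l1 ((a + e) i)
          ≤ ∑ i, (l1 (a i) + l1 (e i)) := Finset.sum_le_sum fun i _ => l1_add_le (a i) (e i)
        _ = ∑ i, l1 (a i) + ‖c‖ := by
            rw [Finset.sum_add_distrib, ← l1_monomial δ c,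
              ← Fintype.sum_pi_single' j (l1 (monomial δ c))]
            congr 1
            exact Finset.sum_congr rfl fun i _ =>
              Pi.apply_single (fun _ => l1) (fun _ => l1_zero) j _ i
    linarith [mul_le_mul_of_nonneg_left hsum (sub_nonneg.mpr hρ)]

lemma l1_remainder_le (hρ : ρ ≤ 1) (hdiv : IsStableDivision f β ρ p a r) : l1 r ≤ l1 p := by
  have hsum : 0 ≤ ∑ i, l1 (a i) := Finset.sum_nonneg fun i _ => l1_nonneg (a i)
  linarith [hdiv.2.1, mul_nonneg (sub_nonneg.mpr hρ) hsum]

lemma sum_l1_quotients_le (hρ : ρ < 1) (hdiv : IsStableDivision f β ρ p a r) :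
    ∑ i, l1 (a i) ≤ (1 - ρ)⁻¹ * l1 p := by
  rw [inv_mul_eq_div, le_div_iff₀ (sub_pos.mpr hρ)]
  linarith [hdiv.2.1, l1_nonneg r]

end IsStableDivision

lemma l1_sub_monomial_mul_add_le {m : MonomialOrder (Fin d)} {g : MvPolynomial (Fin d) ℂ}
    (hg : m.Monic g) (htail : l1 (m.subLTerm g) ≤ ρ) (p : MvPolynomial (Fin d) ℂ)
    {δ γ : Fin d →₀ ℕ} (hγ : δ + m.degree g = γ) :
    l1 (p - monomial δ (p.coeff γ) * g) + (1 - ρ) * ‖p.coeff γ‖ ≤ l1 p := by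
  set c := p.coeff γ
  have hsplit : p - monomial δ c * g = (p - monomial γ c) + monomial δ (-c) * m.subLTerm g := by
    rw [MonomialOrder.subLTerm, hg.leadingCoeff_eq_one, mul_sub, monomial_mul, mul_one, hγ]
    simp only [map_neg, neg_mul]
    ring
  calc l1 (p - monomial δ c * g) + (1 - ρ) * ‖c‖
      ≤ l1 (p - monomial γ c) + ‖c‖ * l1 (m.subLTerm g) + (1 - ρ) * ‖c‖ := by
        rw [hsplit, ← norm_neg c, ← l1_monomial_mul]
        gcongr
        exact l1_add_le _ _
    _ ≤ l1 (p - monomial γ c) + ‖c‖ * ρ + (1 - ρ) * ‖c‖ := by gcongr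
    _ = l1 p := by linarith [norm_coeff_add_l1_sub_monomial_coeff p γ]

theorem exists_isStableDivision (m : MonomialOrder (Fin d)) (hρ : ρ ≤ 1)
    (hf : ∀ j, m.Monic (f j)) (htail : ∀ j, l1 (m.subLTerm (f j)) ≤ ρ)
    (hβ : ∀ j, m.degree (f j) = β j) (p : MvPolynomial (Fin d) ℂ) :
    ∃ a r, IsStableDivision f β ρ p a r := by
  obtain ⟨D, hD⟩ : ∃ D, m.toSyn (m.degree p) = D := ⟨_, rfl⟩
  induction D using WellFoundedLT.induction generalizing p with
  | _ D ih =>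
  have hsmaller : ∀ q, (q = 0 ∨ m.degree q ≺[m] m.degree p) → ∃ a r, IsStableDivision f β ρ q a r := by
    rintro q (rfl | hq)
    · exact ⟨0, 0, isStableDivision_zero⟩
    · exact ih _ (hD ▸ hq) q rfl
  by_cases hdvd : ∃ j, β j ≤ m.degree p
  · obtain ⟨j, hj⟩ := hdvd
    have hδ : (m.degree p - m.degree (f j)) + m.degree (f j) = m.degree p :=
      tsub_add_cancel_of_le ((hβ j).symm ▸ hj)
    obtain ⟨a, r, hdiv⟩ := hsmaller _ (m.sub_monomial_mul_eq_zero_or_degree_lt (hf j) hδ)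
    exact ⟨_, r, hdiv.add_quotient_term hρ j (l1_sub_monomial_mul_add_le (hf j) (htail j) p hδ)⟩
  · obtain ⟨a, r, hdiv⟩ := hsmaller _ (m.subLTerm_eq_zero_or_degree_lt p)
    exact ⟨a, _, hdiv.add_remainder_term (not_exists.mp hdvd)
      (norm_coeff_add_l1_sub_monomial_coeff p (m.degree p)).le⟩

end Division

open scoped MonomialOrder in
theorem stmt3_general (d k : ℕ) (m : MonomialOrder (Fin d))
    (f : Fin k → MvPolynomial (Fin d) ℂ) (β : Fin k → (Fin d →₀ ℕ))
    (ρ : ℝ) (hρ1 : ρ < 1)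
    (hlead : ∀ j, (f j).coeff (β j) = 1)
    (hmax : ∀ j, ∀ α ∈ (f j).support, α ≠ β j → m.toSyn α < m.toSyn (β j))
    (hsmall : ∀ j, ∑ α ∈ (f j).support.erase (β j), ‖(f j).coeff α‖ ≤ ρ)
    (h : MvPolynomial (Fin d) ℂ) :
    ∃ (a : Fin k → MvPolynomial (Fin d) ℂ) (rr : MvPolynomial (Fin d) ℂ),
      h = ∑ i, a i * f i + rr ∧
      ∑ i, l1 (a i) ≤ (1 - ρ)⁻¹ * l1 h ∧
      l1 rr ≤ l1 h ∧
      ∀ γ ∈ rr.support, ∀ j, ¬ β j ≤ γ := by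
  have hdeg : ∀ j, m.degree (f j) = β j := fun j =>
    m.degree_eq_of_coeff_ne_zero (by rw [hlead j]; exact one_ne_zero) (hmax j)
  have hmonic : ∀ j, m.Monic (f j) := fun j => by
    rw [MonomialOrder.Monic, MonomialOrder.leadingCoeff, hdeg j, hlead j]
  have htail : ∀ j, l1 (m.subLTerm (f j)) ≤ ρ := fun j => by
    rw [MonomialOrder.subLTerm, MonomialOrder.leadingCoeff, hdeg j, l1_sub_monomial_coeff]
    exact hsmall j
  obtain ⟨a, r, hdiv⟩ := exists_isStableDivision m hρ1.le hmonic htail hdeg h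
  exact ⟨a, r, hdiv.1, hdiv.sum_l1_quotients_le hρ1, hdiv.l1_remainder_le hρ1.le, hdiv.2.2⟩

open scoped MonomialOrder in
/-- stable division with respect to the ℓ¹ norm, for divisors whose
leading coefficient is 1 and strictly dominates (by `ρ < 1`) the sum of the absolute
values of the remaining coefficients; the remainder has no term divisible by any
leading term, `∑‖aᵢ‖ ≤ (1-ρ)⁻¹‖h‖` and `‖r‖ ≤ ‖h‖`. -/
theorem stmt3 (d k : ℕ) (m : MonomialOrder (Fin d))
    (f : Fin k → MvPolynomial (Fin d) ℂ) (β : Fin k → (Fin d →₀ ℕ))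
    (ρ : ℝ) (hρ0 : 0 < ρ) (hρ1 : ρ < 1)
    (hlead : ∀ j, (f j).coeff (β j) = 1)
    (hmax : ∀ j, ∀ α ∈ (f j).support, α ≠ β j → m.toSyn α < m.toSyn (β j))
    (hsmall : ∀ j, ∑ α ∈ (f j).support.erase (β j), ‖(f j).coeff α‖ ≤ ρ)
    (h : MvPolynomial (Fin d) ℂ) :
    ∃ (a : Fin k → MvPolynomial (Fin d) ℂ) (rr : MvPolynomial (Fin d) ℂ),
      h = ∑ i, a i * f i + rr ∧
      ∑ i, l1 (a i) ≤ (1 - ρ)⁻¹ * l1 h ∧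
      l1 rr ≤ l1 h ∧
      ∀ γ ∈ rr.support, ∀ j, ¬ β j ≤ γ :=
  stmt3_general d k m f β ρ hρ1 hlead hmax hsmall h

end
end

section
/- Let f_1, …, f_k ∈ ℂ[z_1,…,z_d] be finitely many polynomials, not all monomials. Then there exist positive reals λ_1, …, λ_d such that the rescaled polynomials g_j(z_1,…,z_d) := f_j(λ_1 z_1, …, λ_d z_d) satisfy: for every j, if g_j = ∑_α c_α z^α with leading term c_β z^β (with respect to the lexicographic order with z_d > ⋯ > z_1 refined by degree), then |c_β| > ∑_{α ≠ β} |c_α|. -/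
open MvPolynomial Finset

noncomputable section

/-- the strict graded lexicographic order on multi-indices with `z_d > ⋯ > z_1`,
i.e. first compare total degrees, then compare lexicographically from the
variable of largest index downward. -/
def dlexLt {d : ℕ} (α β : Fin d →₀ ℕ) : Prop :=
  mdeg α < mdeg β ∨
    (mdeg α = mdeg β ∧ ∃ i : Fin d, α i < β i ∧ ∀ j : Fin d, i < j → α j = β j)

/-!
Rescaling `z_i ↦ t ^ w_i z_i` multiplies the coefficient of `z^α` by `t ^ ⟨w, α⟩`. Let `D` bound
every exponent that occurs and take `w_i = D ^ d + D ^ i`: the first summand lets the total degree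
dominate and the second reads an exponent vector as a base-`D` numeral with the exponent of `z_d`
as its most significant digit, so `⟨w, α⟩ < ⟨w, β⟩` whenever `z^α` lies below `z^β` in the graded
order. Hence after rescaling every non-leading coefficient of `g_j` is at most `t ^ (⟨w, β⟩ - 1)`
times the original one while the leading one is `t ^ ⟨w, β⟩` times it, and a single large `t`
works for all `j`.
-/

lemma mdeg_eq_degree {d : ℕ} (α : Fin d →₀ ℕ) : mdeg α = α.degree := rfl

theorem coeff_aeval_C_mul_X {R σ : Type*} [CommSemiring R] (c : σ → R) (p : MvPolynomial σ R)
    (α : σ →₀ ℕ) :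
    coeff α (aeval (fun i => C (c i) * X i) p) = (α.prod fun i n => c i ^ n) * coeff α p := by
  induction p using MvPolynomial.induction_on' with
  | add p q hp hq => rw [map_add, coeff_add, hp, hq, coeff_add, mul_add]
  | monomial β a =>
    classical
    rw [aeval_monomial, coeff_monomial]
    simp only [mul_pow, Finsupp.prod_mul, ← map_pow, ← map_finsuppProd, algebraMap_eq,
      coeff_C_mul]
    rw [Finsupp.prod, Finsupp.prod, prod_X_pow_eq_monomial, coeff_monomial]
    split_ifs with h
    · subst h; rw [Finsupp.prod]; ring
    · simp

theorem support_aeval_C_mul_X {R σ : Type*} [CommSemiring R] [IsDomain R] {c : σ → R}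
    (hc : ∀ i, c i ≠ 0) (p : MvPolynomial σ R) :
    (aeval (fun i => C (c i) * X i) p).support = p.support := by
  ext α
  simp only [mem_support_iff, coeff_aeval_C_mul_X, Finsupp.prod]
  exact ⟨right_ne_zero_of_mul,
    mul_ne_zero (prod_ne_zero_iff.2 fun i _ => pow_ne_zero _ (hc i))⟩

theorem norm_coeff_aeval_C_pow_mul_X {σ : Type*} (w : σ → ℕ) {t : ℝ} (ht : 0 ≤ t)
    (p : MvPolynomial σ ℂ) (α : σ →₀ ℕ) :
    ‖coeff α (aeval (fun i => C ((t ^ w i : ℝ) : ℂ) * X i) p)‖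
      = t ^ Finsupp.weight w α * ‖coeff α p‖ := by
  rw [coeff_aeval_C_mul_X, norm_mul, Finsupp.weight_apply, Finsupp.prod, Finsupp.sum,
    ← prod_pow_eq_pow_sum, norm_prod]
  congr 1
  refine prod_congr rfl fun i _ => ?_
  rw [norm_pow, Complex.norm_real, Real.norm_of_nonneg (by positivity), smul_eq_mul, ← pow_mul,
    mul_comm]

theorem sum_norm_coeff_erase_lt_of_weight_lt {σ : Type*} [DecidableEq σ] (w : σ → ℕ) {t : ℝ}
    (ht : 1 ≤ t) (p : MvPolynomial σ ℂ) {β : σ →₀ ℕ}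
    (hW : ∀ α ∈ p.support, α ≠ β → Finsupp.weight w α < Finsupp.weight w β)
    (hβ : ∑ α ∈ p.support.erase β, ‖p.coeff α‖ < t * ‖p.coeff β‖)
    (g : MvPolynomial σ ℂ) (hg : g = aeval (fun i => C ((t ^ w i : ℝ) : ℂ) * X i) p) :
    ∑ α ∈ g.support.erase β, ‖g.coeff α‖ < ‖g.coeff β‖ := by
  have ht0 : 0 < t := by linarith
  subst hg
  rw [support_aeval_C_mul_X (fun i => Complex.ofReal_ne_zero.2 (by positivity)) p]
  simp only [norm_coeff_aeval_C_pow_mul_X w ht0.le]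
  refine lt_of_mul_lt_mul_left ?_ ht0.le
  calc t * ∑ α ∈ p.support.erase β, t ^ Finsupp.weight w α * ‖p.coeff α‖
      = ∑ α ∈ p.support.erase β, t ^ (Finsupp.weight w α + 1) * ‖p.coeff α‖ := by
        rw [mul_sum]
        exact sum_congr rfl fun α _ => by ring
    _ ≤ ∑ α ∈ p.support.erase β, t ^ Finsupp.weight w β * ‖p.coeff α‖ :=
        sum_le_sum fun α hα => mul_le_mul_of_nonneg_right (pow_le_pow_right₀ ht
          (hW α (mem_of_mem_erase hα) (ne_of_mem_erase hα))) (norm_nonneg _)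
    _ = t ^ Finsupp.weight w β * ∑ α ∈ p.support.erase β, ‖p.coeff α‖ := (mul_sum _ _ _).symm
    _ < t ^ Finsupp.weight w β * (t * ‖p.coeff β‖) := by gcongr
    _ = t * (t ^ Finsupp.weight w β * ‖p.coeff β‖) := by ring

theorem exists_forall_sum_norm_coeff_erase_lt {ι σ : Type*} [Finite ι] [DecidableEq σ]
    (f : ι → MvPolynomial σ ℂ) :
    ∃ t : ℝ, 1 ≤ t ∧ ∀ j, ∀ β ∈ (f j).support,
      ∑ α ∈ (f j).support.erase β, ‖(f j).coeff α‖ < t * ‖(f j).coeff β‖ :=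
  ((Filter.eventually_ge_atTop 1).and <| Filter.eventually_all.2 fun _ =>
    (Filter.eventually_all_finset _).2 fun _ hβ =>
      (Filter.tendsto_id.atTop_mul_const
        (norm_pos_iff.2 (mem_support_iff.1 hβ))).eventually_gt_atTop _).exists

theorem exists_forall_apply_lt_of_mem_support {ι σ R : Type*} [Fintype ι] [CommSemiring R]
    (f : ι → MvPolynomial σ R) :
    ∃ D : ℕ, ∀ j, ∀ α ∈ (f j).support, ∀ i, α i < D :=
  ⟨univ.sup (fun j => (f j).totalDegree) + 1, fun j α hα i =>
    Nat.lt_succ_of_le <| (Finsupp.le_degree i α).trans <|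
      (le_totalDegree hα).trans <| le_sup (f := fun j => (f j).totalDegree) (mem_univ j)⟩

theorem sum_pow_mul_lt_pow {N : ℕ} : ∀ {n : ℕ} (a : Fin n → ℕ), (∀ j, a j < N) →
    ∑ j : Fin n, N ^ (j : ℕ) * a j < N ^ n
  | 0, _, _ => by simp
  | n + 1, a, ha => by
    have ih := sum_pow_mul_lt_pow (a ∘ Fin.castSucc) fun j => ha _
    have hlast : N ^ n * (a (Fin.last n) + 1) ≤ N ^ n * N := Nat.mul_le_mul_left _ (ha _)
    rw [Fin.sum_univ_castSucc, pow_succ]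
    simp only [Function.comp_apply, Fin.val_castSucc, Fin.val_last] at ih ⊢
    linarith

theorem sum_pow_mul_lt_sum_pow_mul {N : ℕ} : ∀ {n : ℕ} (a b : Fin n → ℕ), (∀ j, a j < N) →
    ∀ i, a i < b i → (∀ j, i < j → a j = b j) →
    ∑ j : Fin n, N ^ (j : ℕ) * a j < ∑ j : Fin n, N ^ (j : ℕ) * b j
  | 0, _, _, _, i, _, _ => i.elim0
  | n + 1, a, b, ha, i, hi, habove => by
    rw [Fin.sum_univ_castSucc, Fin.sum_univ_castSucc]
    simp only [Fin.val_castSucc, Fin.val_last]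
    induction i using Fin.lastCases with
    | last =>
      have hlow := sum_pow_mul_lt_pow (a ∘ Fin.castSucc) fun j => ha _
      have hlast : N ^ n * (a (Fin.last n) + 1) ≤ N ^ n * b (Fin.last n) :=
        Nat.mul_le_mul_left _ hi
      simp only [Function.comp_apply] at hlow
      linarith [Nat.zero_le (∑ j : Fin n, N ^ (j : ℕ) * b j.castSucc)]
    | cast i =>
      have ih := sum_pow_mul_lt_sum_pow_mul (a ∘ Fin.castSucc) (b ∘ Fin.castSucc)
        (fun j => ha _) i hi fun j hj => habove _ (Fin.castSucc_lt_castSucc_iff.2 hj)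
      rw [habove (Fin.last n) (Fin.castSucc_lt_last i)]
      simp only [Function.comp_apply] at ih
      omega

def dlexWeight (D d : ℕ) (i : Fin d) : ℕ := D ^ d + D ^ (i : ℕ)

theorem weight_dlexWeight (D : ℕ) {d : ℕ} (α : Fin d →₀ ℕ) :
    Finsupp.weight (dlexWeight D d) α = D ^ d * mdeg α + ∑ i : Fin d, D ^ (i : ℕ) * α i := by
  rw [Finsupp.weight_eq_sum, mdeg_eq_degree, Finsupp.degree_eq_sum, mul_sum, ← sum_add_distrib]
  simp only [dlexWeight, smul_eq_mul]
  exact sum_congr rfl fun i _ => by ring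

theorem weight_dlexWeight_lt_of_dlexLt {D d : ℕ} {α β : Fin d →₀ ℕ} (hα : ∀ i, α i < D)
    (h : dlexLt α β) :
    Finsupp.weight (dlexWeight D d) α < Finsupp.weight (dlexWeight D d) β := by
  rw [weight_dlexWeight, weight_dlexWeight]
  rcases h with hdeg | ⟨hdeg, i, hi, habove⟩
  · have hlow := sum_pow_mul_lt_pow (fun i => α i) hα
    have hhigh : D ^ d * (mdeg α + 1) ≤ D ^ d * mdeg β := Nat.mul_le_mul_left _ hdeg
    linarith [Nat.zero_le (∑ i : Fin d, D ^ (i : ℕ) * β i)]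
  · rw [hdeg]
    exact Nat.add_lt_add_left
      (sum_pow_mul_lt_sum_pow_mul (fun i => α i) (fun i => β i) hα i hi habove) _

theorem stmt4_general (d k : ℕ) (f : Fin k → MvPolynomial (Fin d) ℂ) :
    ∃ lam : Fin d → ℝ, (∀ i, 0 < lam i) ∧
      ∀ j, ∀ g : MvPolynomial (Fin d) ℂ,
        g = aeval (fun i : Fin d => C ((lam i : ℝ) : ℂ) * X i) (f j) →
        ∀ β ∈ g.support, (∀ α ∈ g.support, α ≠ β → dlexLt α β) →
          ∑ α ∈ g.support.erase β, ‖g.coeff α‖ < ‖g.coeff β‖ := by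
  obtain ⟨D, hD⟩ := exists_forall_apply_lt_of_mem_support f
  obtain ⟨t, ht, hdom⟩ := exists_forall_sum_norm_coeff_erase_lt f
  refine ⟨fun i => t ^ dlexWeight D d i, fun i => by positivity, ?_⟩
  intro j g hg β hβ hlead
  have hsupp : g.support = (f j).support :=
    hg ▸ support_aeval_C_mul_X (fun i => Complex.ofReal_ne_zero.2 (by positivity)) (f j)
  rw [hsupp] at hβ hlead
  exact sum_norm_coeff_erase_lt_of_weight_lt _ ht (f j)
    (fun α hα hne => weight_dlexWeight_lt_of_dlexLt (hD j α hα) (hlead α hα hne))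
    (hdom j β hβ) g hg

/-- given finitely many polynomials, not all monomials, there is a positive
rescaling `z_i ↦ λ_i z_i` after which, for each `j`, the leading coefficient of the
rescaled `g_j` (w.r.t. graded lex with `z_d > ⋯ > z_1`) strictly dominates the sum
of absolute values of the other coefficients. -/
theorem stmt4 (d k : ℕ) (f : Fin k → MvPolynomial (Fin d) ℂ)
    (hnotmono : ¬ ∀ j, ∃ (α : Fin d →₀ ℕ) (c : ℂ), f j = monomial α c) :
    ∃ lam : Fin d → ℝ, (∀ i, 0 < lam i) ∧
      ∀ j, ∀ g : MvPolynomial (Fin d) ℂ,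
        g = aeval (fun i : Fin d => C ((lam i : ℝ) : ℂ) * X i) (f j) →
        ∀ β ∈ g.support, (∀ α ∈ g.support, α ≠ β → dlexLt α β) →
          ∑ α ∈ g.support.erase β, ‖g.coeff α‖ < ‖g.coeff β‖ :=
  stmt4_general d k f

end
end

section
/- Every submodule of ℂ[z_1,…,z_d] ⊗ ℂ^r generated by monomials has the stable division property with respect to the H² norm, with stable division constant C = 1: there is a finite set of monomial generators f_1,…,f_k such that every h in the module can be written h = ∑ a_i f_i with ∑_i ‖a_i f_i‖² ≤ ‖h‖². -/
open MvPolynomial Finset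

noncomputable section

/-- a vector-valued monomial `z^α ⊗ ξ` -/
def IsVecMonomial {d r : ℕ} (g : Fin r → MvPolynomial (Fin d) ℂ) : Prop :=
  ∃ (α : Fin d →₀ ℕ) (ξ : Fin r → ℂ), g = fun t => monomial α (ξ t)

/-!
The Drury–Arveson norm is a weighted `ℓ²` norm on coefficients in which distinct monomials are
orthogonal, so it suffices to divide coefficient by coefficient. If the module is generated by the
`z ^ α j ⊗ ξ j`, the coefficient of `z ^ β` of any of its elements lies in the span `V_T` of the
`ξ j` with `j ∈ T = {j | α j ≤ β}`. Take as generators `z ^ (sup_{j ∈ T} α j) ⊗ P_T e_t` for all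
`T` and `t`, where `P_T` is the orthogonal projection onto `V_T`. Since `P_T` fixes `V_T`, a
coefficient `η ∈ V_T` equals `∑ t, η t • P_T e_t`, and `‖P_T e_t‖ ≤ 1` gives the constant `1`.
-/

section VectorPolynomial

variable {σ ι R : Type*} [CommSemiring R]

-- `vmonomial β v` is `z ^ β ⊗ v`.
def vmonomial (β : σ →₀ ℕ) : (ι → R) →ₗ[R] ι → MvPolynomial σ R :=
  (monomial β).compLeft ι

def vcoeff (β : σ →₀ ℕ) : (ι → MvPolynomial σ R) →ₗ[R] ι → R :=
  (lcoeff R β).compLeft ι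

@[simp]
lemma vmonomial_apply (β : σ →₀ ℕ) (v : ι → R) (t : ι) : vmonomial β v t = monomial β (v t) :=
  rfl

@[simp]
lemma vcoeff_apply (β : σ →₀ ℕ) (h : ι → MvPolynomial σ R) (t : ι) :
    vcoeff β h t = (h t).coeff β :=
  rfl

lemma monomial_smul_vmonomial (β γ : σ →₀ ℕ) (a : R) (v : ι → R) :
    monomial β a • vmonomial γ v = vmonomial (β + γ) (a • v) := by
  ext t : 1
  simp [monomial_mul]

lemma vcoeff_smul [DecidableEq σ] (β : σ →₀ ℕ) (a : MvPolynomial σ R) (h : ι → MvPolynomial σ R) :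
    vcoeff β (a • h) = ∑ p ∈ antidiagonal β, a.coeff p.1 • vcoeff p.2 h := by
  ext t
  simp [coeff_mul, Finset.sum_apply]

lemma vcoeff_vmonomial [DecidableEq σ] (β γ : σ →₀ ℕ) (v : ι → R) :
    vcoeff β (vmonomial γ v) = if γ = β then v else 0 := by
  ext t
  split_ifs <;> simp [coeff_monomial, *]

lemma sum_vmonomial_vcoeff [Fintype ι] (h : ι → MvPolynomial σ R) {F : Finset (σ →₀ ℕ)}
    (hF : ∀ t, (h t).support ⊆ F) : ∑ β ∈ F, vmonomial β (vcoeff β h) = h := by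
  ext t : 1
  calc (∑ β ∈ F, vmonomial β (vcoeff β h)) t = ∑ β ∈ F, monomial β ((h t).coeff β) :=
        Finset.sum_apply _ _ _
    _ = ∑ β ∈ (h t).support, monomial β ((h t).coeff β) :=
        (Finset.sum_subset (hF t) fun β _ hβ => by rw [notMem_support_iff.mp hβ, map_zero]).symm
    _ = h t := (h t).as_sum.symm

variable {J : Type*} (α : J → σ →₀ ℕ) (ξ : J → ι → R)

lemma vcoeff_mem_span_of_mem_span {h : ι → MvPolynomial σ R}
    (hh : h ∈ Submodule.span (MvPolynomial σ R) (Set.range fun j => vmonomial (α j) (ξ j)))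
    (β : σ →₀ ℕ) : vcoeff β h ∈ Submodule.span R (ξ '' {j | α j ≤ β}) := by
  classical
  induction hh using Submodule.span_induction generalizing β with
  | mem x hx =>
    obtain ⟨j, rfl⟩ := hx
    rw [vcoeff_vmonomial]
    split_ifs with hj
    · exact Submodule.subset_span ⟨j, hj.le, rfl⟩
    · exact Submodule.zero_mem _
  | zero => simp
  | add x y _ _ hx hy => simpa using Submodule.add_mem _ (hx β) (hy β)
  | smul a x _ hx =>
    rw [vcoeff_smul]
    refine Submodule.sum_mem _ fun p hp => Submodule.smul_mem _ _ ?_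
    have hp : p.2 ≤ β := (mem_antidiagonal.mp hp) ▸ le_add_self
    exact Submodule.span_mono (Set.image_mono fun j hj => le_trans hj hp) (hx p.2)

lemma vmonomial_mem_span_of_mem_span {γ : σ →₀ ℕ} {X : Set (ι → R)}
    {Y : Set (ι → MvPolynomial σ R)}
    (hXY : ∀ x ∈ X, vmonomial γ x ∈ Submodule.span (MvPolynomial σ R) Y) {v : ι → R}
    (hv : v ∈ Submodule.span R X) : vmonomial γ v ∈ Submodule.span (MvPolynomial σ R) Y := by
  have hv' := Submodule.mem_map_of_mem (f := vmonomial γ) hv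
  rw [Submodule.map_span] at hv'
  exact (Submodule.span_le (p := (Submodule.span (MvPolynomial σ R) Y).restrictScalars R)).mpr
    (Set.image_subset_iff.mpr hXY) hv'

lemma vmonomial_mem_span_of_le {γ : σ →₀ ℕ} {v : ι → R}
    (hv : v ∈ Submodule.span R (ξ '' {j | α j ≤ γ})) :
    vmonomial γ v ∈
      Submodule.span (MvPolynomial σ R) (Set.range fun j => vmonomial (α j) (ξ j)) := by
  refine vmonomial_mem_span_of_mem_span ?_ hv
  rintro _ ⟨j, hj : α j ≤ γ, rfl⟩
  rw [← tsub_add_cancel_of_le hj, ← one_smul R (ξ j), ← monomial_smul_vmonomial]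
  exact Submodule.smul_mem _ _ (Submodule.subset_span ⟨j, rfl⟩)

end VectorPolynomial

-- `u t` is the orthogonal projection onto `K` of the `t`-th standard basis vector.
lemma Submodule.exists_reproducing_family {𝕜 ι : Type*} [RCLike 𝕜] [Fintype ι] [DecidableEq ι]
    (K : Submodule 𝕜 (ι → 𝕜)) :
    ∃ u : ι → ι → 𝕜, (∀ t, u t ∈ K) ∧ (∀ η ∈ K, ∑ t, η t • u t = η) ∧
      ∀ t, ∑ s, ‖u t s‖ ^ 2 ≤ 1 := by
  let e := (WithLp.linearEquiv 2 𝕜 (ι → 𝕜)).symm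
  let K' := K.map (e : (ι → 𝕜) →ₗ[𝕜] EuclideanSpace 𝕜 ι)
  have mem_K' {η : ι → 𝕜} : e η ∈ K' ↔ η ∈ K := by
    simp [K', Submodule.mem_map_equiv]
  refine ⟨fun t => e.symm (K'.starProjection (EuclideanSpace.single t 1)), fun t => ?_,
    fun η hη => ?_, fun t => ?_⟩
  · rw [← mem_K', LinearEquiv.apply_symm_apply]
    exact K'.starProjection_apply_mem _
  · apply e.injective
    have hη' : e η = ∑ t, η t • EuclideanSpace.single t 1 := by
      ext s
      simp [e, Finset.sum_apply, Pi.single_apply]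
    simp only [map_sum, map_smul, LinearEquiv.apply_symm_apply]
    simp_rw [← map_smul, ← map_sum, ← hη']
    exact K'.starProjection_eq_self_iff.mpr (mem_K'.mpr hη)
  · have h1 : ‖K'.starProjection (EuclideanSpace.single t (1 : 𝕜))‖ ≤ 1 := by
      simpa using K'.norm_starProjection_apply_le (EuclideanSpace.single t (1 : 𝕜))
    rw [← sq_le_one_iff₀ (norm_nonneg _), EuclideanSpace.norm_sq_eq] at h1
    exact h1

section DruryArveson

variable {d r : ℕ}

lemma daW_nonneg (α : Fin d →₀ ℕ) : 0 ≤ daW α := by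
  unfold daW
  positivity

lemma daNormSq_sum_monomial (F : Finset (Fin d →₀ ℕ)) (c : (Fin d →₀ ℕ) → ℂ) :
    daNormSq (∑ β ∈ F, monomial β (c β)) = ∑ β ∈ F, ‖c β‖ ^ 2 * daW β := by
  classical
  have coeff_eq (β : Fin d →₀ ℕ) :
      (∑ γ ∈ F, monomial γ (c γ)).coeff β = if β ∈ F then c β else 0 := by
    simp [coeff_sum, coeff_monomial]
  have hsupp : (∑ γ ∈ F, monomial γ (c γ)).support ⊆ F := fun β hβ => by
    by_contra hβF
    simp [coeff_eq, hβF] at hβ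
  rw [daNormSq, Finset.sum_subset hsupp fun β _ hβ => by simp [notMem_support_iff.mp hβ]]
  exact Finset.sum_congr rfl fun β hβ => by simp [coeff_eq, hβ]

lemma vNormSq_sum_vmonomial (F : Finset (Fin d →₀ ℕ)) (v : (Fin d →₀ ℕ) → Fin r → ℂ) :
    vNormSq (∑ β ∈ F, vmonomial β (v β)) = ∑ β ∈ F, (∑ t, ‖v β t‖ ^ 2) * daW β := by
  simp only [vNormSq, Finset.sum_apply, vmonomial_apply, daNormSq_sum_monomial, Finset.sum_mul]
  exact Finset.sum_comm

lemma vNormSq_eq_sum_vcoeff (h : Fin r → MvPolynomial (Fin d) ℂ) {F : Finset (Fin d →₀ ℕ)}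
    (hF : ∀ t, (h t).support ⊆ F) :
    vNormSq h = ∑ β ∈ F, (∑ t, ‖vcoeff β h t‖ ^ 2) * daW β := by
  conv_lhs => rw [← sum_vmonomial_vcoeff h hF]
  exact vNormSq_sum_vmonomial F _

end DruryArveson

section StableDivision

variable {d r : ℕ}

-- Stable division with constant `1` with respect to the generating family `f` of `M`.
def IsStableGenerating {P : Type*} [Fintype P] (f : P → Fin r → MvPolynomial (Fin d) ℂ)
    (M : Submodule (MvPolynomial (Fin d) ℂ) (Fin r → MvPolynomial (Fin d) ℂ)) : Prop :=
  Submodule.span (MvPolynomial (Fin d) ℂ) (Set.range f) = M ∧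
    ∀ h ∈ M, ∃ a : P → MvPolynomial (Fin d) ℂ,
      h = ∑ p, a p • f p ∧ ∑ p, vNormSq (a p • f p) ≤ vNormSq h

lemma IsStableGenerating.comp_equiv {P Q : Type*} [Fintype P] [Fintype Q]
    {f : P → Fin r → MvPolynomial (Fin d) ℂ}
    {M : Submodule (MvPolynomial (Fin d) ℂ) (Fin r → MvPolynomial (Fin d) ℂ)} (hf : IsStableGenerating f M) (e : Q ≃ P) :
    IsStableGenerating (f ∘ e) M := by
  refine ⟨by rw [e.surjective.range_comp, hf.1], fun h hh => ?_⟩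
  obtain ⟨a, hsum, hnorm⟩ := hf.2 h hh
  refine ⟨a ∘ e, ?_, ?_⟩
  · rw [hsum]
    exact (e.sum_comp fun p => a p • f p).symm
  · exact (e.sum_comp fun p => vNormSq (a p • f p)).trans_le hnorm

-- Distinct monomials are orthogonal, so stable decompositions of the individual coefficients of
-- `h` assemble into a stable division of `h`.
lemma exists_stable_division_of_coeffwise {P : Type*} [Fintype P] (γ : P → Fin d →₀ ℕ)
    (u : P → Fin r → ℂ) (h : Fin r → MvPolynomial (Fin d) ℂ) (c : (Fin d →₀ ℕ) → P → ℂ)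
    (hc_le : ∀ β p, c β p ≠ 0 → γ p ≤ β) (hc_sum : ∀ β, ∑ p, c β p • u p = vcoeff β h)
    (hc_norm : ∀ β, ∑ p, ‖c β p‖ ^ 2 * ∑ t, ‖u p t‖ ^ 2 ≤ ∑ t, ‖vcoeff β h t‖ ^ 2) :
    ∃ a : P → MvPolynomial (Fin d) ℂ, h = ∑ p, a p • vmonomial (γ p) (u p) ∧
      ∑ p, vNormSq (a p • vmonomial (γ p) (u p)) ≤ vNormSq h := by
  classical
  set F := Finset.univ.biUnion fun t => (h t).support
  have hF : ∀ t, (h t).support ⊆ F := fun t =>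
    Finset.subset_biUnion_of_mem (fun t => (h t).support) (Finset.mem_univ t)
  set a : P → MvPolynomial (Fin d) ℂ := fun p => ∑ β ∈ F, monomial (β - γ p) (c β p)
  have piece (p : P) : a p • vmonomial (γ p) (u p) = ∑ β ∈ F, vmonomial β (c β p • u p) := by
    rw [Finset.sum_smul]
    refine Finset.sum_congr rfl fun β _ => ?_
    by_cases hc : c β p = 0
    · simp [hc]
    · rw [monomial_smul_vmonomial, tsub_add_cancel_of_le (hc_le β p hc)]
  refine ⟨a, ?_, ?_⟩ <;> simp only [piece]
  · calc h = ∑ β ∈ F, vmonomial β (vcoeff β h) := (sum_vmonomial_vcoeff h hF).symm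
      _ = ∑ β ∈ F, vmonomial β (∑ p, c β p • u p) := by simp only [hc_sum]
      _ = ∑ p, ∑ β ∈ F, vmonomial β (c β p • u p) := by simp only [map_sum]; exact Finset.sum_comm
  · calc ∑ p, vNormSq (∑ β ∈ F, vmonomial β (c β p • u p))
        = ∑ β ∈ F, (∑ p, ‖c β p‖ ^ 2 * ∑ t, ‖u p t‖ ^ 2) * daW β := by
          simp only [vNormSq_sum_vmonomial, Pi.smul_apply, smul_eq_mul, norm_mul, mul_pow,
            ← Finset.mul_sum, Finset.sum_mul]
          exact Finset.sum_comm
      _ ≤ ∑ β ∈ F, (∑ t, ‖vcoeff β h t‖ ^ 2) * daW β :=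
          Finset.sum_le_sum fun β _ => mul_le_mul_of_nonneg_right (hc_norm β) (daW_nonneg β)
      _ = vNormSq h := (vNormSq_eq_sum_vcoeff h hF).symm

end StableDivision

section MonomialSubmodule

variable {d r : ℕ} {J : Type*} (α : J → Fin d →₀ ℕ) (ξ : J → Fin r → ℂ)
  {u : Finset J → Fin r → Fin r → ℂ}

lemma span_vmonomial_sup_eq (hu_mem : ∀ (T : Finset J) t, u T t ∈ Submodule.span ℂ (ξ '' T))
    (hu_sum : ∀ T : Finset J, ∀ η ∈ Submodule.span ℂ (ξ '' T), ∑ t, η t • u T t = η) :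
    Submodule.span (MvPolynomial (Fin d) ℂ)
        (Set.range fun p : Finset J × Fin r => vmonomial (p.1.sup α) (u p.1 p.2)) =
      Submodule.span (MvPolynomial (Fin d) ℂ) (Set.range fun j => vmonomial (α j) (ξ j)) := by
  refine le_antisymm (Submodule.span_le.mpr ?_) (Submodule.span_le.mpr ?_)
  · rintro _ ⟨⟨T, t⟩, rfl⟩
    have hT : (T : Set J) ⊆ {j | α j ≤ T.sup α} := fun j hj =>
      show α j ≤ T.sup α from Finset.le_sup hj
    exact vmonomial_mem_span_of_le α ξ (Submodule.span_mono (Set.image_mono hT) (hu_mem T t))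
  · rintro _ ⟨j, rfl⟩
    have hξ : ∑ t, ξ j t • u {j} t = ξ j :=
      hu_sum {j} (ξ j) (Submodule.subset_span ⟨j, by simp, rfl⟩)
    change vmonomial (α j) (ξ j) ∈ Submodule.span _ _
    rw [← hξ, map_sum]
    refine Submodule.sum_mem _ fun t _ => ?_
    rw [map_smul]
    exact Submodule.smul_of_tower_mem _ _ (Submodule.subset_span ⟨({j}, t), by simp⟩)

-- The coefficient of `z ^ β` is divided by the generators attached to `{j | α j ≤ β}`.
lemma exists_stable_division_vmonomial_sup [Fintype J]
    (hu_sum : ∀ T : Finset J, ∀ η ∈ Submodule.span ℂ (ξ '' T), ∑ t, η t • u T t = η)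
    (hu_norm : ∀ (T : Finset J) t, ∑ s, ‖u T t s‖ ^ 2 ≤ 1) {h : Fin r → MvPolynomial (Fin d) ℂ}
    (hh : h ∈ Submodule.span (MvPolynomial (Fin d) ℂ) (Set.range fun j => vmonomial (α j) (ξ j))) :
    ∃ a : Finset J × Fin r → MvPolynomial (Fin d) ℂ,
      h = ∑ p, a p • vmonomial (p.1.sup α) (u p.1 p.2) ∧
        ∑ p, vNormSq (a p • vmonomial (p.1.sup α) (u p.1 p.2)) ≤ vNormSq h := by
  classical
  let below (β : Fin d →₀ ℕ) : Finset J := Finset.univ.filter (α · ≤ β)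
  have hmem (β : Fin d →₀ ℕ) : vcoeff β h ∈ Submodule.span ℂ (ξ '' below β) := by
    simpa [below] using vcoeff_mem_span_of_mem_span α ξ hh β
  let c (β : Fin d →₀ ℕ) (p : Finset J × Fin r) : ℂ := if p.1 = below β then vcoeff β h p.2 else 0
  have hc_le (β : Fin d →₀ ℕ) (p : Finset J × Fin r) (hc : c β p ≠ 0) : p.1.sup α ≤ β := by
    obtain ⟨T, t⟩ := p
    obtain rfl : T = below β := by by_contra hT; simp [c, hT] at hc
    exact Finset.sup_le fun j hj => (Finset.mem_filter.mp hj).2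
  have hc_sum (β : Fin d →₀ ℕ) : ∑ p, c β p • u p.1 p.2 = vcoeff β h := by
    simpa [c, Fintype.sum_prod_type_right, ite_smul] using hu_sum _ _ (hmem β)
  have hc_norm (β : Fin d →₀ ℕ) :
      ∑ p, ‖c β p‖ ^ 2 * ∑ s, ‖u p.1 p.2 s‖ ^ 2 ≤ ∑ t, ‖vcoeff β h t‖ ^ 2 :=
    calc ∑ p, ‖c β p‖ ^ 2 * ∑ s, ‖u p.1 p.2 s‖ ^ 2
        = ∑ t, ‖vcoeff β h t‖ ^ 2 * ∑ s, ‖u (below β) t s‖ ^ 2 := by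
          simp [c, Fintype.sum_prod_type_right, apply_ite, ite_mul]
      _ ≤ ∑ t, ‖vcoeff β h t‖ ^ 2 :=
          Finset.sum_le_sum fun t _ => mul_le_of_le_one_right (by positivity) (hu_norm _ t)
  exact exists_stable_division_of_coeffwise (fun p : Finset J × Fin r => p.1.sup α)
    (fun p => u p.1 p.2) h c hc_le hc_sum hc_norm

theorem exists_isStableGenerating_span_vmonomial [Fintype J] :
    ∃ u : Finset J → Fin r → Fin r → ℂ,
      IsStableGenerating (fun p : Finset J × Fin r => vmonomial (p.1.sup α) (u p.1 p.2))
        (Submodule.span (MvPolynomial (Fin d) ℂ) (Set.range fun j => vmonomial (α j) (ξ j))) := by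
  choose u hu_mem hu_sum hu_norm using fun T : Finset J =>
    (Submodule.span ℂ (ξ '' T)).exists_reproducing_family
  exact ⟨u, span_vmonomial_sup_eq α ξ hu_mem hu_sum,
    fun h hh => exists_stable_division_vmonomial_sup α ξ hu_sum hu_norm hh⟩

end MonomialSubmodule

/-- every submodule of `ℂ[z]^r` generated by monomials has the stable division
property with constant `C = 1` for the Drury–Arveson norm. -/
theorem stmt9 (d r : ℕ) (S : Set (Fin r → MvPolynomial (Fin d) ℂ))
    (hS : ∀ g ∈ S, IsVecMonomial g) :
    ∃ (k : ℕ) (f : Fin k → (Fin r → MvPolynomial (Fin d) ℂ)),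
      (∀ i, IsVecMonomial (f i)) ∧
      Submodule.span (MvPolynomial (Fin d) ℂ) (Set.range f) =
        Submodule.span (MvPolynomial (Fin d) ℂ) S ∧
      ∀ h ∈ Submodule.span (MvPolynomial (Fin d) ℂ) S,
        ∃ a : Fin k → MvPolynomial (Fin d) ℂ,
          h = ∑ i, a i • f i ∧ ∑ i, vNormSq (a i • f i) ≤ vNormSq h := by
  obtain ⟨S₀, hS₀S, hspan⟩ :=
    (Submodule.fg_span_iff_fg_span_finset_subset (R := MvPolynomial (Fin d) ℂ) S).mp
      (IsNoetherian.noetherian _)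
  choose α ξ hαξ using fun g : S₀ => hS g (hS₀S g.2)
  have hS₀ : (Set.range fun g : S₀ => vmonomial (α g) (ξ g)) = S₀ := by
    rw [show (fun g : S₀ => vmonomial (α g) (ξ g)) = Subtype.val from funext fun g => (hαξ g).symm]
    exact Subtype.range_coe
  obtain ⟨u, hu⟩ := exists_isStableGenerating_span_vmonomial α ξ
  rw [hS₀, ← hspan] at hu
  obtain ⟨hf_span, hf_div⟩ := hu.comp_equiv (Fintype.equivFin _).symm
  exact ⟨_, _, fun i => ⟨_, _, rfl⟩, hf_span, hf_div⟩

end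
end

section
/- Let I ⊆ ℂ[z_1,…,z_d] be a zero-dimensional homogeneous ideal (i.e., its affine variety V(I) is finite, hence equal to {0}). Then I has finite codimension as a linear subspace of ℂ[z_1,…,z_d], and consequently I has the stable division property with respect to the H² norm. -/
/-!
The zero set of a homogeneous ideal is a cone, so if it is finite it is `{0}`, and by the
Nullstellensatz `X j ^ M ∈ I` for some `M` and all `j`; the quotient is then generated by
nilpotents, hence finite-dimensional. The Drury–Arveson norm is diagonal in the monomial basis, so
sorting the monomials of `h ∈ I` by the first variable whose exponent reaches `M` splits `h`
orthogonally into multiples of the `X j ^ M` and a remainder in the finite-dimensional space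
`I ∩ restrictDegree M`. Expanding that remainder in an orthonormal basis of this space (Parseval)
divides `h` with constant `1`.
-/

open MvPolynomial Finset

noncomputable section

namespace MvPolynomial

section ZeroLocus

variable {σ K : Type*} [Fintype σ] [Field K]

theorem IsHomogeneous.eval_smul {φ : MvPolynomial σ K} {n : ℕ} (hφ : φ.IsHomogeneous n)
    (c : K) (x : σ → K) : eval (c • x) φ = c ^ n * eval x φ := by
  rw [eval_eq', eval_eq', Finset.mul_sum]
  refine Finset.sum_congr rfl fun α hα => ?_
  have hdeg : ∑ i, α i = n := by
    rw [← hφ (mem_support_iff.mp hα), Finsupp.weight_apply, Finsupp.sum_fintype _ _ (by simp)]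
    simp
  simp only [Pi.smul_apply, smul_eq_mul, mul_pow, Finset.prod_mul_distrib,
    Finset.prod_pow_eq_pow_sum, hdeg]
  ring

theorem smul_mem_zeroLocus_of_span_isHomogeneous {S : Set (MvPolynomial σ K)}
    (hS : ∀ f ∈ S, ∃ n, f.IsHomogeneous n) {x : σ → K}
    (hx : x ∈ zeroLocus K (Ideal.span S)) (c : K) : c • x ∈ zeroLocus K (Ideal.span S) := by
  intro f hf
  induction hf using Submodule.span_induction with
  | mem g hg =>
    obtain ⟨n, hn⟩ := hS g hg
    have hg0 : eval x g = 0 := hx g (Ideal.subset_span hg)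
    simp [hn.eval_smul, hg0]
  | zero => simp
  | add a b _ _ ha hb => simp_all
  | smul a b _ hb => simp_all

theorem zeroLocus_span_subset_zero_of_finite {S : Set (MvPolynomial σ K)} [Infinite K]
    (hS : ∀ f ∈ S, ∃ n, f.IsHomogeneous n) (hfin : (zeroLocus K (Ideal.span S)).Finite) :
    zeroLocus K (Ideal.span S) ⊆ {0} := by
  intro x hx
  by_contra hx0
  exact hfin.not_infinite <| Set.infinite_of_injective_forall_mem
    (smul_left_injective K hx0) (smul_mem_zeroLocus_of_span_isHomogeneous hS hx)

theorem exists_X_pow_mem_of_zeroLocus_subset_zero [IsAlgClosed K] {I : Ideal (MvPolynomial σ K)}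
    (hI : zeroLocus K I ⊆ {0}) : ∃ M, ∀ i, (X i : MvPolynomial σ K) ^ M ∈ I := by
  have hX : ∀ i, (X i : MvPolynomial σ K) ∈ I.radical := fun i => by
    rw [← vanishingIdeal_zeroLocus_eq_radical (K := K), mem_vanishingIdeal_iff]
    intro x hx
    simp [show x = 0 from hI hx]
  choose n hn using hX
  exact ⟨∑ i, n i, fun i => I.pow_mem_of_pow_mem (hn i)
    (Finset.single_le_sum (fun j _ => Nat.zero_le (n j)) (Finset.mem_univ i))⟩

end ZeroLocus

theorem finite_quotient_of_X_pow_mem {σ R : Type*} [Fintype σ] [CommRing R]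
    {I : Ideal (MvPolynomial σ R)} {M : ℕ} (hI : ∀ i, (X i : MvPolynomial σ R) ^ M ∈ I) :
    Module.Finite R (MvPolynomial σ R ⧸ I) := by
  have hgen : Algebra.adjoin R (Set.range fun i => Ideal.Quotient.mk I (X i)) = ⊤ := by
    rw [show (fun i => Ideal.Quotient.mk I (X i)) = Ideal.Quotient.mkₐ R I ∘ X from rfl,
      Set.range_comp, ← AlgHom.map_adjoin, adjoin_range_X, Algebra.map_top,
      AlgHom.range_eq_top]
    exact Ideal.Quotient.mkₐ_surjective R I
  have hint : Algebra.adjoin R (Set.range fun i => Ideal.Quotient.mk I (X i)) ≤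
      integralClosure R (MvPolynomial σ R ⧸ I) := by
    refine Algebra.adjoin_le (Set.range_subset_iff.mpr fun i =>
      ⟨Polynomial.X ^ M, Polynomial.monic_X_pow M, ?_⟩)
    rw [Polynomial.eval₂_X_pow, ← map_pow, Ideal.Quotient.eq_zero_iff_mem]
    exact hI i
  have : Algebra.IsIntegral R (MvPolynomial σ R ⧸ I) :=
    ⟨fun q => hint (hgen ▸ Algebra.mem_top)⟩
  exact Algebra.IsIntegral.finite

section Filter

variable {σ R : Type*} [CommSemiring R]

def filter (P : (σ →₀ ℕ) → Prop) [DecidablePred P] (p : MvPolynomial σ R) : MvPolynomial σ R :=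
  ∑ α ∈ p.support.filter P, monomial α (p.coeff α)

theorem coeff_filter (P : (σ →₀ ℕ) → Prop) [DecidablePred P] (p : MvPolynomial σ R)
    (α : σ →₀ ℕ) : (p.filter P).coeff α = if P α then p.coeff α else 0 := by
  classical
  rw [filter, coeff_sum]
  simp only [coeff_monomial]
  rw [Finset.sum_ite_eq']
  by_cases hP : P α <;> by_cases hα : p.coeff α = 0 <;> simp [hP, hα]

theorem support_filter_subset (P : (σ →₀ ℕ) → Prop) [DecidablePred P] (p : MvPolynomial σ R) :
    (p.filter P).support ⊆ p.support.filter P := by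
  intro α hα
  rw [mem_support_iff, coeff_filter] at hα
  split_ifs at hα with hP
  · exact Finset.mem_filter.mpr ⟨mem_support_iff.mpr hα, hP⟩
  · exact absurd rfl hα

theorem sum_filter_fiber {ι : Type*} [Fintype ι] [DecidableEq ι] (g : (σ →₀ ℕ) → ι)
    (p : MvPolynomial σ R) : ∑ i, p.filter (g · = i) = p := by
  ext α
  simp [coeff_sum, coeff_filter]

theorem X_pow_dvd_of_forall_le {p : MvPolynomial σ R} {j : σ} {M : ℕ}
    (h : ∀ α ∈ p.support, M ≤ α j) : X j ^ M ∣ p := by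
  rw [p.as_sum]
  refine Finset.dvd_sum fun α hα => ?_
  rw [X_pow_eq_monomial]
  exact monomial_dvd_monomial.mpr ⟨Or.inr (Finsupp.single_le_iff.mpr (h α hα)), one_dvd _⟩

end Filter

end MvPolynomial

section DruryArveson

variable {d : ℕ}

theorem daW_pos (α : Fin d →₀ ℕ) : 0 < daW α := by
  unfold daW
  positivity

theorem daNormSq_eq_sum_of_support_subset {p : MvPolynomial (Fin d) ℂ}
    {T : Finset (Fin d →₀ ℕ)} (hT : p.support ⊆ T) :
    daNormSq p = ∑ α ∈ T, ‖p.coeff α‖ ^ 2 * daW α :=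
  Finset.sum_subset hT fun α _ hα => by simp [notMem_support_iff.mp hα]

theorem daNormSq_eq_sum_filter_fiber {ι : Type*} [Fintype ι] [DecidableEq ι]
    (g : (Fin d →₀ ℕ) → ι) (p : MvPolynomial (Fin d) ℂ) :
    daNormSq p = ∑ i, daNormSq (p.filter (g · = i)) := by
  have hsub : ∀ i, (p.filter (g · = i)).support ⊆ p.support := fun i =>
    (support_filter_subset _ p).trans (Finset.filter_subset _ _)
  simp_rw [daNormSq_eq_sum_of_support_subset (hsub _), coeff_filter]
  rw [Finset.sum_comm, daNormSq]
  refine Finset.sum_congr rfl fun α _ => ?_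
  simp [apply_ite]

theorem daInner_eq_sum_of_subset {p q : MvPolynomial (Fin d) ℂ} {T : Finset (Fin d →₀ ℕ)}
    (hT : p.support ∪ q.support ⊆ T) :
    daInner p q = ∑ α ∈ T, starRingEnd ℂ (p.coeff α) * q.coeff α * (daW α : ℂ) :=
  Finset.sum_subset hT fun α _ hα => by
    simp [notMem_support_iff.mp (Finset.notMem_union.mp hα).1]

theorem daInner_self (p : MvPolynomial (Fin d) ℂ) : daInner p p = daNormSq p := by
  rw [daInner, Finset.union_self, daNormSq]
  push_cast
  refine Finset.sum_congr rfl fun α _ => ?_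
  rw [mul_comm (starRingEnd ℂ _), Complex.mul_conj']

theorem eq_zero_of_daNormSq_eq_zero {p : MvPolynomial (Fin d) ℂ} (h : daNormSq p = 0) :
    p = 0 := by
  rw [daNormSq, Finset.sum_eq_zero_iff_of_nonneg
    fun α _ => mul_nonneg (sq_nonneg _) (daW_pos α).le] at h
  rw [← support_eq_empty, Finset.eq_empty_iff_forall_notMem]
  intro α hα
  simpa [(daW_pos α).ne', mem_support_iff.mp hα] using h α hα

abbrev daInnerProductCore (d : ℕ) : InnerProductSpace.Core ℂ (MvPolynomial (Fin d) ℂ) where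
  inner := daInner
  conj_inner_symm p q := by
    rw [daInner, daInner, Finset.union_comm, map_sum]
    refine Finset.sum_congr rfl fun α _ => ?_
    simp only [map_mul, Complex.conj_conj, Complex.conj_ofReal]
    ring
  re_inner_nonneg p := by
    simp only [daInner_self, RCLike.re_to_complex, Complex.ofReal_re]
    exact Finset.sum_nonneg fun α _ => mul_nonneg (sq_nonneg _) (daW_pos α).le
  add_left p q r := by
    rw [daInner_eq_sum_of_subset (Finset.union_subset_union_left support_add),
      daInner_eq_sum_of_subset (T := p.support ∪ q.support ∪ r.support) (by grind),
      daInner_eq_sum_of_subset (T := p.support ∪ q.support ∪ r.support) (by grind),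
      ← Finset.sum_add_distrib]
    refine Finset.sum_congr rfl fun α _ => ?_
    rw [coeff_add, map_add]
    ring
  smul_left p q c := by
    rw [daInner_eq_sum_of_subset (Finset.union_subset_union_left support_smul), daInner,
      Finset.mul_sum]
    refine Finset.sum_congr rfl fun α _ => ?_
    rw [coeff_smul, smul_eq_mul, map_mul]
    ring
  definite p hp := eq_zero_of_daNormSq_eq_zero (by exact_mod_cast (daInner_self p).symm.trans hp)

theorem exists_orthonormal_expansion (V : Submodule ℂ (MvPolynomial (Fin d) ℂ))
    [FiniteDimensional ℂ V] :
    ∃ (m : ℕ) (b : Fin m → MvPolynomial (Fin d) ℂ), (∀ i, b i ∈ V) ∧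
      ∀ v ∈ V, ∃ c : Fin m → ℂ, v = ∑ i, c i • b i ∧ ∑ i, daNormSq (c i • b i) = daNormSq v := by
  let := (daInnerProductCore d).toNormedAddCommGroup
  let := InnerProductSpace.ofCore (daInnerProductCore d).toCore
  have hnorm (p : MvPolynomial (Fin d) ℂ) : daNormSq p = ‖p‖ ^ 2 := by
    rw [← inner_self_eq_norm_sq (𝕜 := ℂ), show inner ℂ p p = daInner p p from rfl, daInner_self]
    simp
  let B := stdOrthonormalBasis ℂ V
  refine ⟨_, fun i => B i, fun i => (B i).2, fun v hv => ⟨B.repr ⟨v, hv⟩, ?_, ?_⟩⟩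
  · simpa using congrArg Subtype.val (B.sum_repr ⟨v, hv⟩).symm
  · have hB (i) : ‖(B i : MvPolynomial (Fin d) ℂ)‖ = 1 := B.orthonormal.1 i
    simp_rw [hnorm, norm_smul, mul_pow, hB, one_pow, mul_one]
    rw [← EuclideanSpace.norm_sq_eq, B.repr.norm_map]
    rfl

theorem exists_eq_add_sum_X_pow_mul (M : ℕ) (p : MvPolynomial (Fin d) ℂ) :
    ∃ q ∈ restrictDegree (Fin d) ℂ M, ∃ a : Fin d → MvPolynomial (Fin d) ℂ,
      p = q + ∑ j, a j * X j ^ M ∧ daNormSq p = daNormSq q + ∑ j, daNormSq (a j * X j ^ M) := by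
  classical
  let g (α : Fin d →₀ ℕ) : Option (Fin d) :=
    if h : ∃ j, M ≤ α j then some (Fin.find _ h) else none
  have hdvd (j : Fin d) : X j ^ M ∣ p.filter (g · = some j) := by
    refine X_pow_dvd_of_forall_le fun α hα => ?_
    have hgα := (Finset.mem_filter.mp (support_filter_subset _ _ hα)).2
    simp only [g] at hgα
    split_ifs at hgα with h
    exact Option.some_inj.mp hgα ▸ Fin.find_spec h
  choose a ha using hdvd
  refine ⟨p.filter (g · = none), ?_, a, ?_, ?_⟩
  · rw [mem_restrictDegree]
    intro α hα i
    have hgα := (Finset.mem_filter.mp (support_filter_subset _ _ hα)).2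
    simp only [g, dite_eq_right_iff, reduceCtorEq, imp_false, not_exists, not_le] at hgα
    exact (hgα i).le
  · conv_lhs => rw [← sum_filter_fiber g p, Fintype.sum_option]
    simp [ha, mul_comm]
  · rw [daNormSq_eq_sum_filter_fiber g p, Fintype.sum_option]
    simp [ha, mul_comm]

end DruryArveson

theorem exists_stableDivision_of_X_pow_mem {d M : ℕ} {I : Ideal (MvPolynomial (Fin d) ℂ)}
    (hI : ∀ j, (X j : MvPolynomial (Fin d) ℂ) ^ M ∈ I) :
    ∃ (k : ℕ) (f : Fin k → MvPolynomial (Fin d) ℂ) (Cst : ℝ),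
      Ideal.span (Set.range f) = I ∧
      ∀ h ∈ I, ∃ a : Fin k → MvPolynomial (Fin d) ℂ,
        h = ∑ i, a i * f i ∧ ∑ i, daNormSq (a i * f i) ≤ Cst * daNormSq h := by
  let V := I.restrictScalars ℂ ⊓ restrictDegree (Fin d) ℂ M
  have : FiniteDimensional ℂ V := Submodule.finiteDimensional_of_le inf_le_right
  obtain ⟨m, b, hbV, hexp⟩ := exists_orthonormal_expansion V
  let f := Fin.append b fun j => X j ^ M
  have hfI : ∀ i, f i ∈ I := Fin.addCases (fun i => by simpa [f] using (hbV i).1)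
    (fun j => by simpa [f] using hI j)
  have hdiv : ∀ h ∈ I, ∃ a : Fin (m + d) → MvPolynomial (Fin d) ℂ,
      h = ∑ i, a i * f i ∧ ∑ i, daNormSq (a i * f i) = daNormSq h := by
    intro h hh
    obtain ⟨q, hq, a, rfl, hnorm⟩ := exists_eq_add_sum_X_pow_mul M h
    have hqI : q ∈ I := by
      simpa using I.sub_mem hh
        (I.sum_mem (t := Finset.univ) fun j _ => I.mul_mem_left (a j) (hI j))
    obtain ⟨c, rfl, hc⟩ := hexp q ⟨hqI, hq⟩
    refine ⟨Fin.append (fun i => C (c i)) a, ?_, ?_⟩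
    · simp [f, Fin.sum_univ_add, C_mul']
    · simp [f, Fin.sum_univ_add, C_mul', hnorm, hc]
  refine ⟨m + d, f, 1, le_antisymm ?_ fun h hh => ?_, fun h hh => ?_⟩
  · exact Ideal.span_le.mpr (Set.range_subset_iff.mpr hfI)
  · obtain ⟨a, rfl, -⟩ := hdiv h hh
    exact Ideal.sum_mem _ fun i _ => Ideal.mul_mem_left _ _ (Ideal.subset_span ⟨i, rfl⟩)
  · obtain ⟨a, ha, hnorm⟩ := hdiv h hh
    exact ⟨a, ha, by rw [hnorm, one_mul]⟩

/-- a zero dimensional homogeneous ideal has finite codimension in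
`ℂ[z_1,…,z_d]` and has the stable division property for the Drury–Arveson norm. -/
theorem stmt10 (d : ℕ) (I : Ideal (MvPolynomial (Fin d) ℂ))
    (hhom : ∃ S : Set (MvPolynomial (Fin d) ℂ),
      (∀ f ∈ S, ∃ n, f.IsHomogeneous n) ∧ I = Ideal.span S)
    (hfin : {x : Fin d → ℂ | ∀ f ∈ I, eval x f = 0}.Finite) :
    FiniteDimensional ℂ (MvPolynomial (Fin d) ℂ ⧸ I) ∧
    ∃ (k : ℕ) (f : Fin k → MvPolynomial (Fin d) ℂ) (Cst : ℝ),
      Ideal.span (Set.range f) = I ∧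
      ∀ h ∈ I, ∃ a : Fin k → MvPolynomial (Fin d) ℂ,
        h = ∑ i, a i * f i ∧ ∑ i, daNormSq (a i * f i) ≤ Cst * daNormSq h := by
  obtain ⟨S, hS, rfl⟩ := hhom
  obtain ⟨M, hM⟩ := exists_X_pow_mem_of_zeroLocus_subset_zero
    (zeroLocus_span_subset_zero_of_finite hS hfin)
  exact ⟨finite_quotient_of_X_pow_mem hM, exists_stableDivision_of_X_pow_mem hM⟩

end
end

section
/- On the Drury–Arveson space H²_d, the self-commutator [Z_i, Z_j*] = Z_i Z_j* − Z_j* Z_i restricted to the space H_n of homogeneous polynomials of degree n has operator norm at most 2/(n+1). -/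
/-!
On monomials the commutator is a weighted shift, `z^α ↦ c(α) z^(α + e_i - e_j)` with
`c(α) = α_j / n - (α + e_i)_j / (n + 1)`, and the exponent map is injective where `c(α) ≠ 0`.
So it suffices to compare `c(α)² ‖z^(α + e_i - e_j)‖²` with `‖z^α‖²` monomial by monomial.
For `i = j` the shift is trivial and `|c(α)| = (n - α_i) / (n (n + 1)) ≤ 1 / (n + 1)`.
For `i ≠ j` both exponents are obtained from `α + e_i` by removing one unit, which gives
`α_j ‖z^(α + e_i - e_j)‖² = (α_i + 1) ‖z^α‖²`, so the ratio is
`α_j (α_i + 1) / (n (n + 1))² ≤ 1 / (n + 1)²`. The commutator thus has norm at most `1 / (n + 1)`.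
-/

open MvPolynomial Finset

noncomputable section

namespace DruryArveson

variable {d : ℕ}

lemma mdeg_eq_degree (α : Fin d →₀ ℕ) : mdeg α = α.degree := rfl

lemma daW_nonneg (α : Fin d →₀ ℕ) : 0 ≤ daW α := by
  unfold daW; positivity

lemma daW_single_add (i : Fin d) (α : Fin d →₀ ℕ) :
    daW (Finsupp.single i 1 + α) = (α i + 1) / (mdeg α + 1) * daW α := by
  classical
  have hdeg : mdeg (Finsupp.single i 1 + α) = mdeg α + 1 := by
    simp [mdeg_eq_degree, add_comm]
  have hprod : ∏ k, ((Finsupp.single i 1 + α : Fin d →₀ ℕ) k).factorial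
      = (α i + 1) * ∏ k, (α k).factorial := by
    rw [Fintype.prod_eq_mul_prod_compl i,
      Fintype.prod_eq_mul_prod_compl i (fun k => (α k).factorial),
      Finset.prod_congr rfl fun k hk => by
        rw [Finsupp.add_apply, Finsupp.single_eq_of_ne (by simpa using hk), zero_add]]
    rw [Finsupp.add_apply, Finsupp.single_eq_same, add_comm 1, Nat.factorial_succ, mul_assoc]
  rw [daW, daW, hdeg, Nat.factorial_succ, hprod]
  push_cast
  field_simp

def raiseLower (i j : Fin d) (α : Fin d →₀ ℕ) : Fin d →₀ ℕ :=
  Finsupp.single i 1 + α - Finsupp.single j 1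

lemma raiseLower_self (i : Fin d) (α : Fin d →₀ ℕ) : raiseLower i i α = α :=
  add_tsub_cancel_left _ _

lemma raiseLower_add_single {i j : Fin d} {α : Fin d →₀ ℕ}
    (h : Finsupp.single j 1 ≤ Finsupp.single i 1 + α) :
    raiseLower i j α + Finsupp.single j 1 = Finsupp.single i 1 + α :=
  tsub_add_cancel_of_le h

lemma single_le_single_add_of_ne_zero (i : Fin d) {j : Fin d} {α : Fin d →₀ ℕ} (hα : α j ≠ 0) :
    Finsupp.single j 1 ≤ Finsupp.single i 1 + α :=
  Finsupp.single_le_iff.mpr (by rw [Finsupp.add_apply]; omega)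

lemma raiseLower_injOn (i j : Fin d) :
    Set.InjOn (raiseLower i j) {α | Finsupp.single j 1 ≤ Finsupp.single i 1 + α} := by
  intro α hα β hβ hαβ
  have := raiseLower_add_single hα
  rw [hαβ, raiseLower_add_single hβ] at this
  exact (add_left_cancel this).symm

lemma mdeg_raiseLower {i j : Fin d} {α : Fin d →₀ ℕ}
    (h : Finsupp.single j 1 ≤ Finsupp.single i 1 + α) :
    mdeg (raiseLower i j α) = mdeg α := by
  have := congrArg Finsupp.degree (raiseLower_add_single h)
  simp only [map_add, Finsupp.degree_single] at this
  simp only [mdeg_eq_degree]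
  omega

lemma daW_raiseLower {i j : Fin d} (hij : i ≠ j) {α : Fin d →₀ ℕ} (hα : α j ≠ 0) :
    α j * daW (raiseLower i j α) = (α i + 1) * daW α := by
  have hle := single_le_single_add_of_ne_zero i hα
  have hsum := congrArg daW (raiseLower_add_single hle)
  rw [add_comm, daW_single_add, daW_single_add, mdeg_raiseLower hle] at hsum
  have hj : (raiseLower i j α j : ℝ) + 1 = α j := by
    have := congrArg (· j) (raiseLower_add_single hle)
    rw [Finsupp.add_apply, Finsupp.add_apply, Finsupp.single_eq_same, Finsupp.single_eq_of_ne' hij,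
      zero_add] at this
    exact_mod_cast this
  rw [hj] at hsum
  field_simp at hsum
  linarith

def commutatorCoeff (n : ℕ) (i j : Fin d) (α : Fin d →₀ ℕ) : ℝ :=
  (α j : ℝ) / n - ((Finsupp.single i 1 + α : Fin d →₀ ℕ) j : ℝ) / (n + 1)

lemma single_le_of_commutatorCoeff_ne_zero {n : ℕ} {i j : Fin d} {α : Fin d →₀ ℕ}
    (h : commutatorCoeff n i j α ≠ 0) : Finsupp.single j 1 ≤ Finsupp.single i 1 + α := by
  rw [Finsupp.single_le_iff]
  by_contra! hlt
  have hj : α j = 0 := by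
    simp only [Finsupp.add_apply, Nat.lt_one_iff, Nat.add_eq_zero_iff] at hlt
    exact hlt.2
  simp [commutatorCoeff, hj, Nat.lt_one_iff.mp hlt] at h

lemma commutator_monomial (n : ℕ) (i j : Fin d) (α : Fin d →₀ ℕ) (r : ℂ) :
    X i * ((n : ℂ)⁻¹ • pderiv j (monomial α r)) - ((n : ℂ) + 1)⁻¹ • pderiv j (X i * monomial α r)
      = monomial (raiseLower i j α) (commutatorCoeff n i j α * r) := by
  rw [pderiv_monomial, smul_monomial, X, monomial_mul, one_mul, monomial_mul, one_mul,
    pderiv_monomial, smul_monomial]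
  have hlower : monomial (Finsupp.single i 1 + (α - Finsupp.single j 1)) ((n : ℂ)⁻¹ • (r * α j))
      = monomial (raiseLower i j α) ((n : ℂ)⁻¹ • (r * α j)) := by
    by_cases hj : α j = 0
    · simp [hj]
    · rw [raiseLower,
        add_tsub_assoc_of_le (Finsupp.single_le_iff.mpr (Nat.one_le_iff_ne_zero.mpr hj))]
  rw [hlower, ← raiseLower, ← map_sub]
  congr 1
  simp only [commutatorCoeff, smul_eq_mul]
  push_cast
  ring

lemma commutator_eq_sum (n : ℕ) (i j : Fin d) (h : MvPolynomial (Fin d) ℂ) :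
    X i * ((n : ℂ)⁻¹ • pderiv j h) - ((n : ℂ) + 1)⁻¹ • pderiv j (X i * h)
      = ∑ α ∈ h.support, monomial (raiseLower i j α) (commutatorCoeff n i j α * h.coeff α) := by
  conv_lhs => rw [h.as_sum]
  simp only [map_sum, Finset.mul_sum, Finset.smul_sum, ← Finset.sum_sub_distrib]
  exact Finset.sum_congr rfl fun α _ => commutator_monomial n i j α (h.coeff α)

lemma commutatorCoeff_self_sq_le {n : ℕ} (i : Fin d) {α : Fin d →₀ ℕ} (hα : α i ≤ n) :
    commutatorCoeff n i i α ^ 2 ≤ ((n : ℝ) + 1)⁻¹ ^ 2 := by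
  rcases Nat.eq_zero_or_pos n with rfl | hn
  · simp [commutatorCoeff, Nat.le_zero.mp hα]
  have hαR : (α i : ℝ) ≤ n := by exact_mod_cast hα
  have hc : commutatorCoeff n i i α = -(((n : ℝ) - α i) / n) * ((n : ℝ) + 1)⁻¹ := by
    simp only [commutatorCoeff, Finsupp.add_apply, Finsupp.single_eq_same, Nat.cast_add,
      Nat.cast_one]
    field_simp
    ring
  have h0 : 0 ≤ ((n : ℝ) - α i) / n := div_nonneg (by linarith) (Nat.cast_nonneg n)
  have h1 : ((n : ℝ) - α i) / n ≤ 1 := div_le_one_of_le₀ (by linarith) (Nat.cast_nonneg n)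
  rw [hc, mul_pow, neg_sq]
  exact mul_le_of_le_one_left (by positivity) (pow_le_one₀ h0 h1)

lemma commutatorCoeff_sq_mul_daW_raiseLower_le_of_ne {n : ℕ} {i j : Fin d} (hij : i ≠ j)
    {α : Fin d →₀ ℕ} (hα : mdeg α = n) :
    commutatorCoeff n i j α ^ 2 * daW (raiseLower i j α) ≤ ((n : ℝ) + 1)⁻¹ ^ 2 * daW α := by
  by_cases hj : α j = 0
  · simp [commutatorCoeff, hj, Finsupp.single_eq_of_ne' hij]
    exact mul_nonneg (by positivity) (daW_nonneg α)
  have hW := daW_raiseLower hij hj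
  have hle := single_le_single_add_of_ne_zero i hj
  have hjn : (α j : ℝ) ≤ n := by
    have := Finsupp.le_degree j α
    rw [← mdeg_eq_degree, hα] at this
    exact_mod_cast this
  have hin : (α i : ℝ) + 1 ≤ n := by
    have := Finsupp.le_degree i (raiseLower i j α)
    rw [← mdeg_eq_degree, mdeg_raiseLower hle, hα] at this
    simp only [raiseLower, Finsupp.tsub_apply, Finsupp.add_apply, Finsupp.single_eq_same,
      Finsupp.single_eq_of_ne hij, tsub_zero] at this
    exact_mod_cast (by omega : α i + 1 ≤ n)
  have hn : (0 : ℝ) < n := lt_of_lt_of_le (by positivity) hjn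
  have hc : commutatorCoeff n i j α = α j / (n * (n + 1)) := by
    simp only [commutatorCoeff, Finsupp.add_apply, Finsupp.single_eq_of_ne' hij, zero_add]
    field_simp
    ring
  calc commutatorCoeff n i j α ^ 2 * daW (raiseLower i j α)
      = α j * (α j * daW (raiseLower i j α)) / (n * (n + 1)) ^ 2 := by rw [hc, div_pow]; ring
    _ = α j * (α i + 1) * daW α / (n * (n + 1)) ^ 2 := by rw [hW]; ring
    _ ≤ n * n * daW α / (n * (n + 1)) ^ 2 := by
        have := daW_nonneg α
        gcongr
    _ = ((n : ℝ) + 1)⁻¹ ^ 2 * daW α := by field_simp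

lemma commutatorCoeff_sq_mul_daW_raiseLower_le {n : ℕ} (i j : Fin d) {α : Fin d →₀ ℕ}
    (hα : mdeg α = n) :
    commutatorCoeff n i j α ^ 2 * daW (raiseLower i j α) ≤ ((n : ℝ) + 1)⁻¹ ^ 2 * daW α := by
  rcases eq_or_ne i j with rfl | hij
  · rw [raiseLower_self]
    exact mul_le_mul_of_nonneg_right
      (commutatorCoeff_self_sq_le i (hα ▸ Finsupp.le_degree i α)) (daW_nonneg α)
  · exact commutatorCoeff_sq_mul_daW_raiseLower_le_of_ne hij hα

lemma daNormSq_nonneg (p : MvPolynomial (Fin d) ℂ) : 0 ≤ daNormSq p :=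
  Finset.sum_nonneg fun α _ => mul_nonneg (by positivity) (daW_nonneg α)

lemma daNormSq_eq_sum_of_support_subset {p : MvPolynomial (Fin d) ℂ}
    {S : Finset (Fin d →₀ ℕ)} (hS : p.support ⊆ S) :
    daNormSq p = ∑ α ∈ S, ‖p.coeff α‖ ^ 2 * daW α :=
  Finset.sum_subset hS fun α _ hα => by simp [notMem_support_iff.mp hα]

lemma daNormSq_sum_monomial (s : Finset (Fin d →₀ ℕ)) (g : (Fin d →₀ ℕ) → (Fin d →₀ ℕ))
    (c : (Fin d →₀ ℕ) → ℂ) (hg : Set.InjOn g ↑{α ∈ s | c α ≠ 0}) :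
    daNormSq (∑ α ∈ s, monomial (g α) (c α)) = ∑ α ∈ s, ‖c α‖ ^ 2 * daW (g α) := by
  classical
  set t := {α ∈ s | c α ≠ 0}
  have hpoly : ∑ α ∈ t, monomial (g α) (c α) = ∑ α ∈ s, monomial (g α) (c α) :=
    Finset.sum_filter_of_ne fun α _ hα hc => hα (by simp [hc])
  have hnorm : ∑ α ∈ t, ‖c α‖ ^ 2 * daW (g α) = ∑ α ∈ s, ‖c α‖ ^ 2 * daW (g α) :=
    Finset.sum_filter_of_ne fun α _ hα hc => hα (by simp [hc])
  have hcoeff : ∀ α ∈ t, coeff (g α) (∑ β ∈ t, monomial (g β) (c β)) = c α := by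
    intro α hα
    rw [coeff_sum, Finset.sum_eq_single α
      (fun β hβ hne => by rw [coeff_monomial, if_neg fun e => hne (hg hβ hα e)])
      (fun h => absurd hα h), coeff_monomial, if_pos rfl]
  have hsupp : (∑ β ∈ t, monomial (g β) (c β)).support ⊆ t.image g := by
    refine support_sum.trans (Finset.biUnion_subset.mpr fun β hβ => ?_)
    exact (support_monomial_subset).trans (by simpa using Finset.mem_image_of_mem g hβ)
  rw [← hpoly, ← hnorm, daNormSq_eq_sum_of_support_subset hsupp, Finset.sum_image hg]
  exact Finset.sum_congr rfl fun α hα => by rw [hcoeff α hα]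

end DruryArveson

open DruryArveson in
/-- On `H_n`, `Z_j^*` acts as `n⁻¹ ∂/∂z_j` (with `0⁻¹ = 0` this is also right on constants), and
on `H_{n+1}` as `(n+1)⁻¹ ∂/∂z_j`. -/
theorem stmt12 (d n : ℕ) (i j : Fin d) (h : MvPolynomial (Fin d) ℂ)
    (hh : h.IsHomogeneous n) :
    daNormSq (X i * (((n : ℂ))⁻¹ • pderiv j h) - (((n : ℂ) + 1))⁻¹ • pderiv j (X i * h))
      ≤ (2 / ((n : ℝ) + 1)) ^ 2 * daNormSq h := by
  have hinj : Set.InjOn (raiseLower i j)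
      ↑{α ∈ h.support | (commutatorCoeff n i j α : ℂ) * h.coeff α ≠ 0} :=
    (raiseLower_injOn i j).mono fun α hα =>
      single_le_of_commutatorCoeff_ne_zero
        (Complex.ofReal_ne_zero.mp (left_ne_zero_of_mul (Finset.mem_filter.mp hα).2))
  rw [commutator_eq_sum, daNormSq_sum_monomial _ _ _ hinj]
  calc ∑ α ∈ h.support, ‖(commutatorCoeff n i j α : ℂ) * h.coeff α‖ ^ 2 * daW (raiseLower i j α)
      ≤ ∑ α ∈ h.support, ((n : ℝ) + 1)⁻¹ ^ 2 * (‖h.coeff α‖ ^ 2 * daW α) :=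
        Finset.sum_le_sum fun α hα => by
          have hdeg : mdeg α = n := (hh.degree_eq_sum_deg_support hα).symm
          have := mul_le_mul_of_nonneg_left (commutatorCoeff_sq_mul_daW_raiseLower_le i j hdeg)
            (sq_nonneg ‖h.coeff α‖)
          rw [norm_mul, Complex.norm_real, Real.norm_eq_abs, mul_pow, sq_abs]
          linarith
    _ = ((n : ℝ) + 1)⁻¹ ^ 2 * daNormSq h := by rw [← Finset.mul_sum]; rfl
    _ ≤ (2 / ((n : ℝ) + 1)) ^ 2 * daNormSq h := by
        gcongr
        · exact daNormSq_nonneg h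
        · rw [inv_eq_one_div]; gcongr; norm_num

end
end
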